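/- Let u, x ∈ Δ have strictly positive entries, g ∈ ℝ^d, and γ, η > 0. The minimizer over Δ of v ↦ γη⟨g, v⟩ + η·KL(v‖x) + KL(v‖u) is given coordinatewise by v_j = x_j^{η/(η+1)} u_j^{1/(η+1)} e^{−γη g_j/(1+η)} / ∑_{ℓ=1}^d x_ℓ^{η/(η+1)} u_ℓ^{1/(η+1)} e^{−γη g_ℓ/(1+η)}. -/

import Mathlib

/-!
Writing `w_j = x_j^{η/(η+1)} u_j^{1/(η+1)} e^{-γη g_j/(1+η)}`, the logarithms combine so that the
objective equals `(1 + η) · ∑ v_j log (v_j / w_j)` identically in `v`. On the simplex this is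
`(1 + η) (KL(v ‖ w / ∑ w) - log ∑ w)`, which Gibbs' inequality minimizes at `v = w / ∑ w`.
-/

/-- Probability simplex in ℝ^d. -/
def simplex (d : ℕ) : Set (Fin d → ℝ) :=
  {z | (∀ j, 0 ≤ z j) ∧ ∑ j, z j = 1}

/-- Kullback–Leibler divergence. -/
noncomputable def KL {d : ℕ} (z u : Fin d → ℝ) : ℝ :=
  ∑ j, z j * Real.log (z j / u j)

open Real

lemma sub_le_mul_log_div {a b : ℝ} (ha : 0 ≤ a) (hb : 0 < b) : a - b ≤ a * log (a / b) := by
  rcases ha.eq_or_lt with rfl | ha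
  · simpa using hb.le
  · have h := one_sub_inv_le_log_of_pos (div_pos ha hb)
    calc a - b = a * (1 - (a / b)⁻¹) := by field_simp
      _ ≤ a * log (a / b) := mul_le_mul_of_nonneg_left h ha.le

lemma sum_pos_of_mem_simplex {d : ℕ} {v w : Fin d → ℝ} (hv : v ∈ simplex d)
    (hw : ∀ j, 0 < w j) : 0 < ∑ l, w l := by
  rcases Nat.eq_zero_or_pos d with rfl | hd
  · simpa using hv.2
  · exact Finset.sum_pos (fun l _ => hw l) ⟨⟨0, hd⟩, Finset.mem_univ _⟩

lemma div_sum_mem_simplex {d : ℕ} {w : Fin d → ℝ} (hw : ∀ j, 0 < w j) (hS : 0 < ∑ l, w l) :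
    (fun j => w j / ∑ l, w l) ∈ simplex d := by
  refine ⟨fun j => (div_pos (hw j) hS).le, ?_⟩
  rw [← Finset.sum_div, div_self hS.ne']

lemma KL_self {d : ℕ} (v : Fin d → ℝ) : KL v v = 0 :=
  Finset.sum_eq_zero fun j _ => by by_cases h : v j = 0 <;> simp [h]

lemma KL_nonneg {d : ℕ} {v w : Fin d → ℝ} (hv : v ∈ simplex d) (hw : w ∈ simplex d)
    (hwpos : ∀ j, 0 < w j) : 0 ≤ KL v w :=
  calc (0 : ℝ) = ∑ j, (v j - w j) := by rw [Finset.sum_sub_distrib, hv.2, hw.2, sub_self]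
    _ ≤ KL v w := Finset.sum_le_sum fun j _ => sub_le_mul_log_div (hv.1 j) (hwpos j)

lemma KL_div_sum {d : ℕ} {v w : Fin d → ℝ} (hv : ∑ j, v j = 1) (hw : ∀ j, 0 < w j)
    (hS : ∑ l, w l ≠ 0) :
    KL v (fun j => w j / ∑ l, w l) = KL v w + log (∑ l, w l) := by
  have hterm : ∀ j, v j * log (v j / (w j / ∑ l, w l))
      = v j * log (v j / w j) + log (∑ l, w l) * v j := by
    intro j
    by_cases h : v j = 0
    · simp [h]
    · rw [div_div_eq_mul_div, mul_div_right_comm,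
        log_mul (div_ne_zero h (hw j).ne') hS]
      ring
  rw [KL, KL, Finset.sum_congr rfl fun j _ => hterm j, Finset.sum_add_distrib,
    ← Finset.mul_sum, hv, mul_one]

lemma KL_div_sum_le {d : ℕ} {v w : Fin d → ℝ} (hw : ∀ j, 0 < w j) (hv : v ∈ simplex d) :
    KL (fun j => w j / ∑ l, w l) w ≤ KL v w := by
  have hS := sum_pos_of_mem_simplex hv hw
  have hstar := div_sum_mem_simplex hw hS
  have hv_star := KL_div_sum hv.2 hw hS.ne'
  have hstar_star := KL_div_sum hstar.2 hw hS.ne'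
  have hgibbs := KL_nonneg hv hstar fun j => div_pos (hw j) hS
  rw [KL_self] at hstar_star
  linarith

noncomputable def compositeWeight {d : ℕ} (x u g : Fin d → ℝ) (γ η : ℝ) (j : Fin d) : ℝ :=
  x j ^ (η / (η + 1)) * u j ^ (1 / (η + 1)) * exp (-(γ * η * g j) / (1 + η))

lemma compositeWeight_pos {d : ℕ} {u x : Fin d → ℝ} (hupos : ∀ j, 0 < u j)
    (hxpos : ∀ j, 0 < x j) (g : Fin d → ℝ) (γ η : ℝ) (j : Fin d) :
    0 < compositeWeight x u g γ η j := by
  have := hxpos j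
  have := hupos j
  unfold compositeWeight
  positivity

lemma composite_objective_eq {d : ℕ} {u x : Fin d → ℝ} (hupos : ∀ j, 0 < u j)
    (hxpos : ∀ j, 0 < x j) (g v : Fin d → ℝ) (γ : ℝ) {η : ℝ} (hη : 1 + η ≠ 0) :
    γ * η * (∑ j, g j * v j) + η * KL v x + KL v u
      = (1 + η) * KL v (compositeWeight x u g γ η) := by
  have hterm : ∀ j, γ * η * (g j * v j) + η * (v j * log (v j / x j)) + v j * log (v j / u j)
      = (1 + η) * (v j * log (v j / compositeWeight x u g γ η j)) := by
    intro j
    by_cases hv : v j = 0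
    · simp [hv]
    have hx := hxpos j
    have hu := hupos j
    have hη' : η + 1 ≠ 0 := by rwa [add_comm]
    have hw := compositeWeight_pos hupos hxpos g γ η j
    rw [log_div hv hx.ne', log_div hv hu.ne', log_div hv hw.ne', compositeWeight,
      log_mul (by positivity) (by positivity), log_mul (by positivity) (by positivity),
      log_rpow hx, log_rpow hu, log_exp]
    field_simp
    ring
  rw [KL, KL, KL, Finset.mul_sum, Finset.mul_sum, Finset.mul_sum, ← Finset.sum_add_distrib,
    ← Finset.sum_add_distrib]
  exact Finset.sum_congr rfl fun j _ => hterm j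

theorem composite_entropic_step_general {d : ℕ}
    (u x : Fin d → ℝ) (hu : u ∈ simplex d)
    (hupos : ∀ j, 0 < u j) (hxpos : ∀ j, 0 < x j)
    (g : Fin d → ℝ) (γ η : ℝ) (hη : 0 < η) :
    let vstar : Fin d → ℝ := fun j =>
      x j ^ (η / (η + 1)) * u j ^ (1 / (η + 1)) *
          Real.exp (-(γ * η * g j) / (1 + η)) /
        ∑ ℓ, x ℓ ^ (η / (η + 1)) * u ℓ ^ (1 / (η + 1)) *
          Real.exp (-(γ * η * g ℓ) / (1 + η))
    vstar ∈ simplex d ∧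
      ∀ v ∈ simplex d,
        γ * η * (∑ j, g j * vstar j) + η * KL vstar x + KL vstar u
          ≤ γ * η * (∑ j, g j * v j) + η * KL v x + KL v u := by
  intro vstar
  have hw := compositeWeight_pos hupos hxpos g γ η
  refine ⟨div_sum_mem_simplex hw (sum_pos_of_mem_simplex hu hw), fun v hv => ?_⟩
  rw [composite_objective_eq hupos hxpos g vstar γ (by positivity),
    composite_objective_eq hupos hxpos g v γ (by positivity)]
  exact mul_le_mul_of_nonneg_left (KL_div_sum_le hw hv) (by positivity)

/-- Closed-form solution of the composite proximal step with two KL terms: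
the minimizer of `v ↦ γη⟨g, v⟩ + η·KL(v‖x) + KL(v‖u)` over the simplex is the
given multiplicative-weights formula. -/
theorem composite_entropic_step {d : ℕ}
    (u x : Fin d → ℝ) (hu : u ∈ simplex d) (hx : x ∈ simplex d)
    (hupos : ∀ j, 0 < u j) (hxpos : ∀ j, 0 < x j)
    (g : Fin d → ℝ) (γ η : ℝ) (hγ : 0 < γ) (hη : 0 < η) :
    let vstar : Fin d → ℝ := fun j =>
      x j ^ (η / (η + 1)) * u j ^ (1 / (η + 1)) *
          Real.exp (-(γ * η * g j) / (1 + η)) /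
        ∑ ℓ, x ℓ ^ (η / (η + 1)) * u ℓ ^ (1 / (η + 1)) *
          Real.exp (-(γ * η * g ℓ) / (1 + η))
    vstar ∈ simplex d ∧
      ∀ v ∈ simplex d,
        γ * η * (∑ j, g j * vstar j) + η * KL vstar x + KL vstar u
          ≤ γ * η * (∑ j, g j * v j) + η * KL v x + KL v u :=
  composite_entropic_step_general u x hu hupos hxpos g γ η hη
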